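/- arXiv:math/0411241 — 8 statements merged into one kernel-verified Lean document; each statement's English description precedes it below -/
import Mathlib

section
/- Let S(m) have (i,j)-entry (-1)^{j-i}·C(m-i,j-i), and let U(m) be the backward identity matrix with (i,j)-entry δ_{i+j,m}. Then the matrix D(m) := S(m)·U(m)·S(m)^{-1} has (i,j)-entry (-1)^{m-i}·C(i,j). -/
/-!
Identify a row vector `(a_0, …, a_m)` with the polynomial `∑ a_j X^j`. Row `i` of `S(m)` is then
`X^i (1 - X)^(m-i)`, and right multiplication by `U(m)` reverses coefficients, so row `i` of
`S U` is `(X - 1)^(m-i)`. Row `i` of `D S` is `(-1)^(m-i) ∑_k C(i,k) X^k (1 - X)^(m-k)`, which the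
binomial theorem collapses to `(-1)^(m-i) (1 - X)^(m-i)`. Hence `S U = D S`, and `S` is
unitriangular, so invertible.
-/

open Polynomial Finset

theorem sum_range_choose_nsmul_pow_mul_pow {R : Type*} [CommSemiring R] (x y : R) {n m : ℕ}
    (hnm : n ≤ m) :
    ∑ k ∈ range (m + 1), n.choose k • (x ^ k * y ^ (m - k)) = (x + y) ^ n * y ^ (m - n) := by
  rw [← sum_subset (range_subset_range.mpr (Nat.succ_le_succ hnm)), add_pow, sum_mul]
  · refine sum_congr rfl fun k hk => ?_
    rw [nsmul_eq_mul, ← Nat.sub_add_sub_cancel hnm (Nat.lt_succ_iff.mp (mem_range.mp hk)), pow_add]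
    ring
  · intro k _ hk
    rw [Nat.choose_eq_zero_of_lt (by simpa using hk), zero_smul]

namespace Polynomial

variable {R : Type*} [CommRing R]

theorem coeff_X_sub_one_pow (n k : ℕ) :
    ((X - 1 : R[X]) ^ n).coeff k = (-1) ^ (n - k) * n.choose k := by
  rw [← coeff_X_add_C_pow, C_neg, C_1, sub_eq_add_neg]

theorem coeff_one_sub_X_pow (n k : ℕ) :
    ((1 - X : R[X]) ^ n).coeff k = (-1) ^ k * n.choose k := by
  have h : (1 - X : R[X]) ^ n = C ((-1) ^ n) * (X - 1) ^ n := by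
    rw [C_pow, C_neg, C_1, ← mul_pow, neg_one_mul, neg_sub]
  rw [h, coeff_C_mul, coeff_X_sub_one_pow]
  rcases le_or_gt k n with hkn | hnk
  · obtain ⟨d, rfl⟩ := Nat.exists_eq_add_of_le hkn
    rw [Nat.add_sub_cancel_left, pow_add, mul_assoc, ← mul_assoc (_ ^ d), ← mul_pow, neg_one_mul,
      neg_neg, one_pow, one_mul]
  · rw [Nat.choose_eq_zero_of_lt hnk, Nat.cast_zero, mul_zero, mul_zero, mul_zero]

end Polynomial

namespace Matrix

variable {R ι κ : Type*} [Semiring R]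

def ofCoeffs (n : ℕ) (p : ι → R[X]) : Matrix ι (Fin n) R := of fun i j => (p i).coeff j

theorem mul_ofCoeffs [Fintype κ] {n : ℕ} (A : Matrix ι κ R) (p : κ → R[X]) :
    A * ofCoeffs n p = ofCoeffs n fun i => ∑ k, A i k • p k := by
  ext i j
  simp [mul_apply, ofCoeffs, finsetSum_coeff]

end Matrix

namespace BinomialConjugation

open Matrix

variable (R : Type*) [CommRing R] (m : ℕ)

def S : Matrix (Fin (m + 1)) (Fin (m + 1)) R :=
  of fun i j => if (i : ℕ) ≤ j then (-1) ^ ((j : ℕ) - i) * ((m - i).choose ((j : ℕ) - i)) else 0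

def U : Matrix (Fin (m + 1)) (Fin (m + 1)) R :=
  of fun i j => if (i : ℕ) + (j : ℕ) = m then 1 else 0

def D : Matrix (Fin (m + 1)) (Fin (m + 1)) R :=
  of fun i j => (-1) ^ (m - (i : ℕ)) * ((i : ℕ).choose (j : ℕ))

theorem isUnit_det_S : IsUnit (S R m).det := by
  rw [det_of_isUpperTriangular (M := S R m) fun i j hij => if_neg (not_le.mpr hij)]
  simp [S]

theorem mul_U_apply {ι : Type*} (A : Matrix ι (Fin (m + 1)) R) (i : ι) (j : Fin (m + 1)) :
    (A * U R m) i j = A i j.rev := by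
  rw [mul_apply, sum_eq_single_of_mem j.rev (mem_univ _)]
  · rw [U, of_apply, if_pos (by simp; omega), mul_one]
  · intro k _ hk
    rw [U, of_apply, if_neg (fun h => hk (by ext; simp; omega)), mul_zero]

theorem S_eq_ofCoeffs :
    S R m = ofCoeffs (m + 1) fun i : Fin (m + 1) => (X : R[X]) ^ (i : ℕ) * (1 - X) ^ (m - i) := by
  ext i j
  simp only [S, ofCoeffs, of_apply, coeff_X_pow_mul', coeff_one_sub_X_pow]

theorem S_mul_U :
    S R m * U R m = ofCoeffs (m + 1) fun i : Fin (m + 1) => (X - 1 : R[X]) ^ (m - (i : ℕ)) := by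
  ext i j
  rw [mul_U_apply, S, ofCoeffs, of_apply, of_apply, coeff_X_sub_one_pow, Fin.val_rev]
  split_ifs with h
  · rw [Nat.choose_symm_of_eq_add (by omega : m - i = m + 1 - (j + 1) - i + j)]
    congr 2
    omega
  · rw [Nat.choose_eq_zero_of_lt (by omega), Nat.cast_zero, mul_zero]

theorem D_mul_S :
    D R m * S R m = ofCoeffs (m + 1) fun i : Fin (m + 1) => (X - 1 : R[X]) ^ (m - (i : ℕ)) := by
  rw [S_eq_ofCoeffs, mul_ofCoeffs]
  congr 1
  ext i : 1
  simp_rw [D, of_apply, mul_smul, ← smul_sum, Nat.cast_smul_eq_nsmul]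
  rw [Fin.sum_univ_eq_sum_range (fun k => (i : ℕ).choose k • ((X : R[X]) ^ k * (1 - X) ^ (m - k))),
    sum_range_choose_nsmul_pow_mul_pow _ _ (Nat.lt_succ_iff.mp i.2), add_sub_cancel, one_pow,
    one_mul, smul_eq_C_mul, C_pow, C_neg, C_1, ← mul_pow, neg_one_mul, neg_sub]

end BinomialConjugation

open BinomialConjugation

/-- `D(m) := S(m) · U(m) · S(m)⁻¹` has `(i,j)` entry `(-1)^{m-i} C(i,j)`. -/
theorem D_eq_SUSinv (m : ℕ) :
    (Matrix.of fun i j : Fin (m + 1) =>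
        if (i : ℕ) ≤ j then (-1 : ℚ) ^ ((j : ℕ) - i) * ((m - i).choose ((j : ℕ) - i)) else 0) *
      (Matrix.of fun i j : Fin (m + 1) => if (i : ℕ) + (j : ℕ) = m then (1 : ℚ) else 0) *
      (Matrix.of fun i j : Fin (m + 1) =>
        if (i : ℕ) ≤ j then (-1 : ℚ) ^ ((j : ℕ) - i) *
          ((m - i).choose ((j : ℕ) - i)) else 0)⁻¹ =
    Matrix.of fun i j : Fin (m + 1) =>
      (-1 : ℚ) ^ (m - (i : ℕ)) * ((i : ℕ).choose (j : ℕ)) := by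
  change S ℚ m * U ℚ m * (S ℚ m)⁻¹ = D ℚ m
  rw [S_mul_U, ← D_mul_S, Matrix.mul_nonsing_inv_cancel_right _ _ (isUnit_det_S ℚ m)]
end

section
/- The matrix I(m) - D(m), where D(m) has (i,j)-entry (-1)^{m-i}·C(i,j), is lower-triangular and has rank ⌊(m+1)/2⌋ over the rationals, and its eigenvalues are 0 and 2. -/
/-!
Up to the sign `(-1) ^ m`, `D(m)` is the matrix of `p(x) ↦ p(-x-1)` on polynomials of degree
`≤ m` in the monomial basis, so `D(m)` is an involution; concretely, this is the inversion
formula `∑ⱼ (-1)ʲ C(i,j) C(j,k) = (-1)ⁱ δᵢₖ`. Hence `P = (I - D) / 2` is idempotent, its rank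
is its trace `(m + 1 - tr D) / 2 = ⌊(m + 1) / 2⌋`, and its spectrum is `{0, 1}`: the diagonal
entries `(1 - (-1)^(m-i)) / 2` take both values 0 and 1, so `P ≠ 0, I`.
-/

open Finset Polynomial Matrix

theorem sum_neg_one_pow_mul_choose_mul_choose {R : Type*} [CommRing R] {i n : ℕ} (hi : i < n)
    (k : ℕ) :
    ∑ j ∈ range n, (-1 : R) ^ j * i.choose j * j.choose k = if k = i then (-1) ^ i else 0 := by
  rw [← sum_subset (range_subset_range.2 hi) fun j _ hj => by
    rw [Nat.choose_eq_zero_of_lt (by simpa using hj), Nat.cast_zero, mul_zero, zero_mul]]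
  -- compare the coefficients of `X ^ k` in `(-(X + 1) + 1) ^ i = (-X) ^ i`
  have h := congrArg (coeff · k) (add_pow (C (-1) * (X + 1) : R[X]) 1 i)
  simp only [show C (-1) * (X + 1) + 1 = C (-1) * (X : R[X]) by simp, mul_pow, ← C_pow,
    one_pow, mul_one, finsetSum_coeff, coeff_C_mul, coeff_X_pow, ← C_eq_natCast, coeff_mul_C,
    coeff_X_add_one_pow, mul_ite, mul_zero] at h
  rw [h]
  exact sum_congr rfl fun j _ => by ring

theorem neg_one_pow_sub {R : Type*} [Monoid R] [HasDistribNeg R] {m i : ℕ} (h : i ≤ m) :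
    (-1 : R) ^ (m - i) = (-1) ^ m * (-1) ^ i := by
  rw [← pow_sub_mul_pow (-1 : R) h, mul_assoc, ← pow_add, ← two_mul, pow_mul, neg_one_sq,
    one_pow, mul_one]

theorem isIdempotentElem_inv_two_smul_one_sub {K A : Type*} [Field K] [NeZero (2 : K)] [Ring A]
    [Algebra K A] {d : A} (hd : d * d = 1) : IsIdempotentElem ((2⁻¹ : K) • (1 - d)) := by
  have h : (1 - d) * (1 - d) = (2 : K) • (1 - d) := by
    rw [two_smul, sub_mul, mul_sub, mul_sub, hd, one_mul, mul_one, one_mul]; abel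
  rw [IsIdempotentElem, smul_mul_smul_comm, h, smul_smul, mul_assoc, inv_mul_cancel₀ two_ne_zero,
    mul_one]

theorem Matrix.rank_eq_trace_of_isIdempotentElem {K n : Type*} [Field K] [Fintype n]
    [DecidableEq n] {P : Matrix n n K} (hP : IsIdempotentElem P) : (P.rank : K) = P.trace := by
  have hf : IsIdempotentElem (toLin' P) := hP.map toLinAlgEquiv'
  rw [← trace_toLin'_eq, (LinearMap.isProj_range_iff_isIdempotentElem _).2 hf |>.trace, rank,
    ← toLin'_apply']

theorem IsIdempotentElem.spectrum_eq {K A : Type*} [Field K] [Ring A] [Algebra K A] {p : A}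
    (hp : IsIdempotentElem p) (h0 : p ≠ 0) (h1 : p ≠ 1) : spectrum K p = {0, 1} := by
  refine (hp.spectrum_subset K).antisymm ?_
  rintro k (rfl | rfl)
  · rw [spectrum.zero_mem_iff]
    exact fun hu => h1 (hu.mul_left_cancel (hp.eq.trans (mul_one p).symm))
  · rw [spectrum.mem_iff, map_one]
    intro hu
    exact h0 (hu.mul_right_cancel (by rw [mul_sub, mul_one, hp.eq, sub_self, zero_mul]))

/-- The matrix `D(m)`. -/
def signedPascal (R : Type*) [Ring R] (m : ℕ) : Matrix (Fin (m + 1)) (Fin (m + 1)) R :=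
  of fun i j => (-1 : R) ^ (m - (i : ℕ)) * ((i : ℕ).choose (j : ℕ))

section signedPascal

variable (R : Type*) (m : ℕ)

theorem signedPascal_apply_of_lt [Ring R] {i j : Fin (m + 1)} (h : (i : ℕ) < j) :
    signedPascal R m i j = 0 := by
  simp [signedPascal, Nat.choose_eq_zero_of_lt h]

theorem signedPascal_apply_self [Ring R] (i : Fin (m + 1)) :
    signedPascal R m i i = (-1) ^ (m - (i : ℕ)) := by
  simp [signedPascal]

theorem signedPascal_mul_self [CommRing R] : signedPascal R m * signedPascal R m = 1 := by
  ext i k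
  have hsign (j : Fin (m + 1)) : (-1 : R) ^ (m - (j : ℕ)) = (-1) ^ m * (-1) ^ (j : ℕ) :=
    neg_one_pow_sub j.is_le
  calc (signedPascal R m * signedPascal R m) i k
      = (-1) ^ (m - (i : ℕ)) * (-1) ^ m *
          ∑ j ∈ range (m + 1), (-1 : R) ^ j * (i : ℕ).choose j * j.choose k := by
        rw [mul_apply, ← Fin.sum_univ_eq_sum_range
          (fun j => (-1 : R) ^ j * (i : ℕ).choose j * j.choose k), mul_sum]
        refine sum_congr rfl fun j _ => ?_
        simp only [signedPascal, of_apply, hsign j]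
        ring
    _ = (1 : Matrix (Fin (m + 1)) (Fin (m + 1)) R) i k := by
        rw [sum_neg_one_pow_mul_choose_mul_choose i.is_lt, one_apply]
        rcases eq_or_ne i k with rfl | hik
        · rw [if_pos rfl, if_pos rfl, hsign, ← pow_add, ← pow_add, ← pow_add]
          exact Even.neg_one_pow ⟨m + i, by ring⟩
        · rw [if_neg (Fin.val_ne_of_ne hik.symm), if_neg hik, mul_zero]

theorem trace_signedPascal [CommRing R] :
    (signedPascal R m).trace = if Even (m + 1) then 0 else 1 := by
  rw [trace, ← neg_one_geom_sum, ← sum_range_reflect]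
  simp only [Matrix.diag, signedPascal_apply_self, Nat.add_sub_cancel]
  exact Fin.sum_univ_eq_sum_range (fun i => (-1 : R) ^ (m - i)) (m + 1)

variable {K : Type*} [Field K] [CharZero K]

theorem rank_one_sub_signedPascal : (1 - signedPascal K m).rank = (m + 1) / 2 := by
  have hP := isIdempotentElem_inv_two_smul_one_sub (K := K) (signedPascal_mul_self K m)
  have htrace : 2 * (1 - signedPascal K m).rank + (if Even (m + 1) then 0 else 1) = m + 1 := by
    have h := rank_eq_trace_of_isIdempotentElem hP
    rw [rank_smul_of_mem_nonZeroDivisors _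
        (mem_nonZeroDivisors_of_ne_zero (inv_ne_zero two_ne_zero)), trace_smul, trace_sub,
      trace_one, trace_signedPascal, Fintype.card_fin, smul_eq_mul] at h
    exact_mod_cast (by push_cast at h ⊢; rw [h]; ring :
      ((2 * (1 - signedPascal K m).rank + (if Even (m + 1) then 0 else 1) : ℕ) : K) = m + 1)
  split_ifs at htrace with hev
  · have := Nat.even_iff.1 hev; omega
  · have := Nat.odd_iff.1 (Nat.not_even_iff_odd.1 hev); omega

theorem spectrum_one_sub_signedPascal (hm : 1 ≤ m) :
    spectrum K (1 - signedPascal K m) = {0, 2} := by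
  set P := (2⁻¹ : K) • (1 - signedPascal K m)
  have hP : IsIdempotentElem P := isIdempotentElem_inv_two_smul_one_sub (signedPascal_mul_self K m)
  have hdiag (i : Fin (m + 1)) : P i i = 2⁻¹ * (1 - (-1) ^ (m - (i : ℕ))) := by
    simp [P, signedPascal_apply_self]
  have h0 : P ≠ 0 := fun h => by
    simpa [hdiag, show m - (m - 1) = 1 by omega] using
      congr_fun₂ h ⟨m - 1, by omega⟩ ⟨m - 1, by omega⟩
  have h1 : P ≠ 1 := fun h => by simpa [hdiag] using congr_fun₂ h (Fin.last m) (Fin.last m)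
  have hM : 1 - signedPascal K m = (2 : K) • P := by simp [P, smul_smul]
  rw [hM, spectrum.smul_eq_smul _ _ ⟨0, by simp [hP.spectrum_eq h0 h1]⟩, hP.spectrum_eq h0 h1,
    Set.smul_set_insert, Set.smul_set_singleton, smul_zero, smul_eq_mul, mul_one]

end signedPascal

/-- `I(m) - D(m)` is lower triangular, has rank `⌊(m+1)/2⌋`, and its eigenvalues
(the spectrum) are `0` and `2`. -/
theorem I_sub_D_properties (m : ℕ) (hm : 2 ≤ m) :
    (∀ i j : Fin (m + 1), (i : ℕ) < j →
      ((1 : Matrix (Fin (m + 1)) (Fin (m + 1)) ℚ) -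
        Matrix.of (fun i j : Fin (m + 1) =>
          (-1 : ℚ) ^ (m - (i : ℕ)) * ((i : ℕ).choose (j : ℕ)))) i j = 0) ∧
    ((1 : Matrix (Fin (m + 1)) (Fin (m + 1)) ℚ) -
        Matrix.of (fun i j : Fin (m + 1) =>
          (-1 : ℚ) ^ (m - (i : ℕ)) * ((i : ℕ).choose (j : ℕ)))).rank = (m + 1) / 2 ∧
    spectrum ℚ
      ((1 : Matrix (Fin (m + 1)) (Fin (m + 1)) ℚ) -
        Matrix.of (fun i j : Fin (m + 1) =>
          (-1 : ℚ) ^ (m - (i : ℕ)) * ((i : ℕ).choose (j : ℕ)))) = {0, 2} := by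
  refine ⟨fun i j hij => ?_, rank_one_sub_signedPascal m,
    spectrum_one_sub_signedPascal m (by omega)⟩
  change (1 - signedPascal ℚ m) i j = 0
  rw [Matrix.sub_apply, one_apply_ne (Fin.ne_of_lt hij), signedPascal_apply_of_lt ℚ m hij,
    sub_zero]
end

section
/- The matrix I(m) - U(m), where U(m) is the backward identity matrix, is totally unimodular: every minor of I(m)-U(m) belongs to {-1,0,1}. -/
private lemma S_mul {a b : ℤ} (ha : a ∈ ({-1, 0, 1} : Set ℤ)) (hb : b ∈ ({-1, 0, 1} : Set ℤ)) :
    a * b ∈ ({-1, 0, 1} : Set ℤ) := by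
  simp only [Set.mem_insert_iff, Set.mem_singleton_iff] at *
  rcases ha with rfl | rfl | rfl <;> rcases hb with rfl | rfl | rfl <;> norm_num

/-- `I(m) - U(m)` is totally unimodular: every minor lies in `{-1, 0, 1}`. -/
theorem I_sub_U_totally_unimodular (m : ℕ) :
    ∀ (k : ℕ) (f g : Fin k → Fin (m + 1)),
      (((1 : Matrix (Fin (m + 1)) (Fin (m + 1)) ℤ) -
          Matrix.of (fun i j : Fin (m + 1) =>
            if (i : ℕ) + (j : ℕ) = m then (1 : ℤ) else 0)).submatrix f g).det ∈
        ({-1, 0, 1} : Set ℤ) := by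
  set A : Matrix (Fin (m + 1)) (Fin (m + 1)) ℤ :=
    (1 : Matrix (Fin (m + 1)) (Fin (m + 1)) ℤ) -
      Matrix.of (fun i j : Fin (m + 1) =>
        if (i : ℕ) + (j : ℕ) = m then (1 : ℤ) else 0) with hA
  have hAentry : ∀ i j, A i j =
      (if i = j then (1 : ℤ) else 0) - (if (i : ℕ) + (j : ℕ) = m then 1 else 0) := by
    intro i j
    simp [hA, Matrix.one_apply, Matrix.sub_apply]
  have hAmem : ∀ i j, A i j ∈ ({-1, 0, 1} : Set ℤ) := by
    intro i j
    rw [hAentry]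
    simp only [Set.mem_insert_iff, Set.mem_singleton_iff]
    split_ifs <;> norm_num
  intro k
  induction k with
  | zero =>
    intro f g
    simp [Matrix.det_fin_zero]
  | succ n ih =>
    intro f g
    by_cases hf : Function.Injective f
    · by_cases hall : ∀ x : Fin (n + 1),
        (∃ i, f i = g x) ∧ (∃ i, ((f i : ℕ) + (g x : ℕ) = m))
      · -- every column of the submatrix has both a +1 and a -1, so column sums vanish
        have hdet : (A.submatrix f g).det = 0 := by
          rw [← Matrix.exists_vecMul_eq_zero_iff]
          refine ⟨(fun _ => 1), ?_, ?_⟩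
          · intro h
            have := congrFun h 0
            simp at this
          · funext x
            obtain ⟨⟨i₁, hi₁⟩, ⟨i₂, hi₂⟩⟩ := hall x
            simp only [Matrix.vecMul, dotProduct, Pi.one_apply, one_mul,
              Matrix.submatrix_apply, Pi.zero_apply]
            have h1 : (∑ i : Fin (n + 1), if f i = g x then (1 : ℤ) else 0) = 1 := by
              rw [Finset.sum_eq_single i₁]
              · simp [hi₁]
              · intro b _ hb
                have : f b ≠ g x := fun h => hb (hf (h.trans hi₁.symm))
                simp [this]
              · simp
            have h2 : (∑ i : Fin (n + 1),
                if ((f i : ℕ) + (g x : ℕ) = m) then (1 : ℤ) else 0) = 1 := by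
              rw [Finset.sum_eq_single i₂]
              · simp [hi₂]
              · intro b _ hb
                have : ¬ ((f b : ℕ) + (g x : ℕ) = m) := by
                  intro h
                  exact hb (hf (Fin.ext (by omega)))
                simp [this]
              · simp
            calc (∑ i : Fin (n + 1), A (f i) (g x))
                = ∑ i : Fin (n + 1),
                    ((if f i = g x then (1 : ℤ) else 0) -
                      (if ((f i : ℕ) + (g x : ℕ) = m) then 1 else 0)) := by
                  simp_rw [hAentry]
              _ = 0 := by rw [Finset.sum_sub_distrib, h1, h2]; ring
        rw [hdet]; simp
      · -- some column of the submatrix has at most one nonzero entry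
        push_neg at hall
        obtain ⟨x, hx⟩ := hall
        have huniq : ∀ i₁ i₂ : Fin (n + 1),
            A (f i₁) (g x) ≠ 0 → A (f i₂) (g x) ≠ 0 → i₁ = i₂ := by
          intro i₁ i₂ h₁ h₂
          rw [hAentry] at h₁ h₂
          by_cases hcol : ∃ i, f i = g x
          case neg =>
            have e₁ : f i₁ ≠ g x := fun e => hcol ⟨i₁, e⟩
            have e₂ : f i₂ ≠ g x := fun e => hcol ⟨i₂, e⟩
            simp only [e₁, e₂, if_false] at h₁ h₂
            have c₁ : (f i₁ : ℕ) + (g x : ℕ) = m := by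
              by_contra hc; simp [hc] at h₁
            have c₂ : (f i₂ : ℕ) + (g x : ℕ) = m := by
              by_contra hc; simp [hc] at h₂
            exact hf (Fin.ext (by omega))
          case pos =>
            have h := hx hcol
            have e₁ : ¬((f i₁ : ℕ) + (g x : ℕ) = m) := h i₁
            have e₂ : ¬((f i₂ : ℕ) + (g x : ℕ) = m) := h i₂
            simp only [e₁, e₂, if_false] at h₁ h₂
            have c₁ : f i₁ = g x := by by_contra hc; simp [hc] at h₁
            have c₂ : f i₂ = g x := by by_contra hc; simp [hc] at h₂
            exact hf (c₁.trans c₂.symm)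
        by_cases hnz : ∃ i₀, A (f i₀) (g x) ≠ 0
        · obtain ⟨i₀, hi₀⟩ := hnz
          have hexp := Matrix.det_succ_column (A.submatrix f g) x
          rw [Finset.sum_eq_single i₀] at hexp
          · rw [hexp]
            refine S_mul (S_mul ?_ ?_) ?_
            · rcases neg_one_pow_eq_or ℤ ((i₀ : ℕ) + (x : ℕ)) with h | h <;> rw [h] <;> simp
            · exact hAmem (f i₀) (g x)
            · have := ih (f ∘ i₀.succAbove) (g ∘ x.succAbove)
              rw [Matrix.submatrix_submatrix]
              exact this
          · intro b _ hb
            have : A (f b) (g x) = 0 := by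
              by_contra hc
              exact hb (huniq b i₀ hc hi₀)
            simp [Matrix.submatrix_apply, this]
          · intro h
            exact absurd (Finset.mem_univ i₀) h
        · push_neg at hnz
          rw [Matrix.det_eq_zero_of_column_eq_zero x (fun i => hnz i)]
          simp
    · -- two equal rows
      rw [Function.not_injective_iff] at hf
      obtain ⟨i, j, hij, hne⟩ := hf
      rw [Matrix.det_zero_of_row_eq hne (by funext y; simp [Matrix.submatrix_apply, hij])]
      simp
end

section
/- For 1 ≤ k ≤ m, the vector h(overline{2^{[k]}};m) with l-th component (-1)^l·(C(m-k,l) - (-1)^k·C(m-k,l-k)) satisfies h(overline{2^{[k]}};m)·U(m) = (-1)^{m-k+1}·h(overline{2^{[k]}};m), i.e., h_{m-l} = (-1)^{m-k+1}·h_l for all l. In particular, it is an eigenvector of U(m) for eigenvalue 1 when m ≡ k-1 (mod 2). -/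
lemma negpow_sub_aux (a b : ℕ) (h : b ≤ a) :
    (-1 : ℤ) ^ (a - b) = (-1) ^ a * (-1) ^ b := by
  have h1 : ((-1 : ℤ) ^ b) * ((-1) ^ b) = 1 := by
    rw [← pow_add]; exact Even.neg_one_pow ⟨b, rfl⟩
  calc (-1 : ℤ) ^ (a - b) = (-1) ^ (a - b) * ((-1) ^ b * (-1) ^ b) := by
        rw [h1, mul_one]
    _ = (-1) ^ (a - b + b) * (-1) ^ b := by rw [pow_add]; ring
    _ = (-1) ^ a * (-1) ^ b := by rw [Nat.sub_add_cancel h]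

/-- The vector `h(overline{2^{[k]}};m)` with `l`-th component
`(-1)^l (C(m-k,l) - (-1)^k C(m-k,l-k))` satisfies `h_{m-l} = (-1)^{m-k+1} h_l`;
in particular it is an eigenvector of `U(m)` for eigenvalue `1` when `m ≡ k-1 (mod 2)`. -/
theorem boundary_h_vector_symmetry (m k : ℕ) (hk1 : 1 ≤ k) (hkm : k ≤ m)
    (h : ℕ → ℤ)
    (hh : ∀ l, h l = (-1 : ℤ) ^ l * (((m - k).choose l : ℤ) -
      (-1 : ℤ) ^ k * (if k ≤ l then ((m - k).choose (l - k) : ℤ) else 0))) :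
    ∀ l ≤ m, h (m - l) = (-1 : ℤ) ^ (m - k + 1) * h l := by
  intro l hl
  rw [hh, hh]
  have hk2 : ((-1 : ℤ) ^ k) * ((-1) ^ k) = 1 := by
    rw [← pow_add]; exact Even.neg_one_pow ⟨k, rfl⟩
  have e1 : (-1 : ℤ) ^ (m - l) = (-1) ^ m * (-1) ^ l := negpow_sub_aux m l hl
  have e2 : (-1 : ℤ) ^ (m - k + 1) = (-1) ^ m * (-1) ^ k * (-1) := by
    rw [pow_add, negpow_sub_aux m k hkm, pow_one]
  rw [e1, e2]
  rcases le_or_gt k l with hkl | hkl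
  · have h1 : (m - k).choose (m - l) = (m - k).choose (l - k) := by
      rw [show m - l = (m - k) - (l - k) by omega]
      exact Nat.choose_symm (by omega)
    rcases le_or_gt l (m - k) with hln | hln
    · have h2 : k ≤ m - l := by omega
      have h3 : (m - k).choose (m - l - k) = (m - k).choose l := by
        rw [show m - l - k = (m - k) - l by omega]
        exact Nat.choose_symm hln
      simp only [if_pos hkl, if_pos h2, h1, h3]
      linear_combination -(-(1:ℤ)) ^ m * (-1) ^ l * ((m - k).choose (l - k) : ℤ) * hk2
    · have h2 : ¬ k ≤ m - l := by omega
      have h3 : (m - k).choose l = 0 := Nat.choose_eq_zero_of_lt hln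
      simp only [if_pos hkl, if_neg h2, h1, h3]
      push_cast
      linear_combination -(-(1:ℤ)) ^ m * (-1) ^ l * ((m - k).choose (l - k) : ℤ) * hk2
  · have h1 : (m - k).choose (m - l) = 0 := Nat.choose_eq_zero_of_lt (by omega)
    have h2 : ¬ k ≤ l := by omega
    rcases le_or_gt l (m - k) with hln | hln
    · have h3 : k ≤ m - l := by omega
      have h4 : (m - k).choose (m - l - k) = (m - k).choose l := by
        rw [show m - l - k = (m - k) - l by omega]
        exact Nat.choose_symm hln
      simp only [h1, if_neg h2, if_pos h3, h4]
      push_cast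
      ring
    · have h3 : ¬ k ≤ m - l := by omega
      have h4 : (m - k).choose l = 0 := Nat.choose_eq_zero_of_lt hln
      simp only [h1, if_neg h2, if_neg h3, h4]
      push_cast
      ring
end

section
/- For positive integers s,t ≤ m with s ≢ t (mod 2), the vectors h(overline{2^{[s]}};m) and h(overline{2^{[t]}};m), with l-th components (-1)^l·(C(m-s,l)-(-1)^s·C(m-s,l-s)) and (-1)^l·(C(m-t,l)-(-1)^t·C(m-t,l-t)) respectively, are orthogonal: ∑_{l=0}^m h_l(overline{2^{[s]}};m)·h_l(overline{2^{[t]}};m) = 0. -/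
open Finset

lemma aux_reflect (m u l : ℕ) (hu1 : 1 ≤ u) (hum : u ≤ m) (hl : l ≤ m) :
    (((m - u).choose (m - l) : ℤ) -
        (-1 : ℤ) ^ u * (if u ≤ m - l then ((m - u).choose (m - l - u) : ℤ) else 0))
      = -(-1 : ℤ) ^ u * (((m - u).choose l : ℤ) -
        (-1 : ℤ) ^ u * (if u ≤ l then ((m - u).choose (l - u) : ℤ) else 0)) := by
  have h1 : ((m - u).choose (m - l) : ℤ)
      = (if u ≤ l then ((m - u).choose (l - u) : ℤ) else 0) := by
    by_cases h : u ≤ l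
    · rw [show m - l = (m - u) - (l - u) by omega,
        Nat.choose_symm (by omega : l - u ≤ m - u)]
      simp [h]
    · simp [h, Nat.choose_eq_zero_of_lt (show m - u < m - l by omega)]
  have h2 : (if u ≤ m - l then ((m - u).choose (m - l - u) : ℤ) else 0)
      = ((m - u).choose l : ℤ) := by
    by_cases h : u ≤ m - l
    · rw [if_pos h, show m - l - u = (m - u) - l by omega,
        Nat.choose_symm (by omega : l ≤ m - u)]
    · simp [h, Nat.choose_eq_zero_of_lt (show m - u < l by omega)]
  rw [h1, h2]
  have hsq : ((-1 : ℤ) ^ u) * ((-1 : ℤ) ^ u) = 1 := by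
    rw [← pow_add]
    exact Even.neg_one_pow ⟨u, rfl⟩
  generalize ((-1 : ℤ) ^ u) = p at hsq ⊢
  linear_combination (-(if u ≤ l then ((m - u).choose (l - u) : ℤ) else 0)) * hsq

/-- Biorthogonality: for `s ≢ t (mod 2)` the vectors `h(overline{2^{[s]}};m)` and
`h(overline{2^{[t]}};m)` are orthogonal. -/
theorem boundary_h_vectors_orthogonal (m s t : ℕ)
    (hs1 : 1 ≤ s) (hsm : s ≤ m) (ht1 : 1 ≤ t) (htm : t ≤ m) (hst : s % 2 ≠ t % 2) :
    ∑ l ∈ Finset.range (m + 1),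
      ((-1 : ℤ) ^ l * (((m - s).choose l : ℤ) -
          (-1 : ℤ) ^ s * (if s ≤ l then ((m - s).choose (l - s) : ℤ) else 0))) *
      ((-1 : ℤ) ^ l * (((m - t).choose l : ℤ) -
          (-1 : ℤ) ^ t * (if t ≤ l then ((m - t).choose (l - t) : ℤ) else 0))) = 0 := by
  set A : ℕ → ℤ := fun l => ((m - s).choose l : ℤ) -
      (-1 : ℤ) ^ s * (if s ≤ l then ((m - s).choose (l - s) : ℤ) else 0) with hA
  set B : ℕ → ℤ := fun l => ((m - t).choose l : ℤ) -
      (-1 : ℤ) ^ t * (if t ≤ l then ((m - t).choose (l - t) : ℤ) else 0) with hB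
  have hst' : (-1 : ℤ) ^ s * (-1 : ℤ) ^ t = -1 := by
    rw [← pow_add]
    exact Odd.neg_one_pow (Nat.odd_iff.mpr (by omega))
  have step1 : ∀ l, ((-1 : ℤ) ^ l * A l) * ((-1 : ℤ) ^ l * B l) = A l * B l := by
    intro l
    have : ((-1 : ℤ) ^ l) * ((-1 : ℤ) ^ l) = 1 := by
      rw [← pow_add]; exact Even.neg_one_pow ⟨l, rfl⟩
    calc ((-1 : ℤ) ^ l * A l) * ((-1 : ℤ) ^ l * B l)
        = ((-1 : ℤ) ^ l * (-1 : ℤ) ^ l) * (A l * B l) := by ring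
      _ = A l * B l := by rw [this, one_mul]
  have hsum : ∑ l ∈ Finset.range (m + 1),
      ((-1 : ℤ) ^ l * A l) * ((-1 : ℤ) ^ l * B l)
      = ∑ l ∈ Finset.range (m + 1), A l * B l :=
    Finset.sum_congr rfl (fun l _ => step1 l)
  rw [hsum]
  have hrefl : ∑ l ∈ Finset.range (m + 1), A l * B l
      = ∑ l ∈ Finset.range (m + 1), A (m - l) * B (m - l) := by
    have := Finset.sum_range_reflect (fun l => A l * B l) (m + 1)
    simpa using this.symm
  have hneg : ∀ l ∈ Finset.range (m + 1), A (m - l) * B (m - l) = -(A l * B l) := by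
    intro l hl
    have hlm : l ≤ m := by simpa [Nat.lt_succ_iff] using hl
    have ha := aux_reflect m s l hs1 hsm hlm
    have hb := aux_reflect m t l ht1 htm hlm
    have hA' : A (m - l) = -(-1 : ℤ) ^ s * A l := ha
    have hB' : B (m - l) = -(-1 : ℤ) ^ t * B l := hb
    rw [hA', hB']
    have : (-(-1 : ℤ) ^ s) * (-(-1 : ℤ) ^ t) = -1 := by
      rw [neg_mul_neg, hst']
    linear_combination (A l * B l) * this
  have h3 : ∑ l ∈ Finset.range (m + 1), A (m - l) * B (m - l)
      = -∑ l ∈ Finset.range (m + 1), A l * B l := by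
    rw [Finset.sum_congr rfl hneg]
    simp
  linarith [hrefl, h3]
end

section
/- For a positive integer k ≤ m, the squared Euclidean norm of the vector with l-th component (-1)^l·(C(m-k,l) - (-1)^k·C(m-k,l-k)), l=0,...,m, equals 2·( C(2(m-k), m-k) - (-1)^k·C(2(m-k), m) ). -/
open Finset

lemma sum_choose_sq_aux (n m : ℕ) (h : n ≤ m) :
    ∑ l ∈ range (m + 1), (n.choose l) ^ 2 = (2 * n).choose n := by
  have h1 : (2 * n).choose n = ∑ l ∈ range (n + 1), n.choose l * n.choose (n - l) := by
    rw [two_mul, Nat.add_choose_eq, Finset.Nat.sum_antidiagonal_eq_sum_range_succ_mk]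
  have h2 : ∑ l ∈ range (n + 1), (n.choose l) ^ 2 = ∑ l ∈ range (m + 1), (n.choose l) ^ 2 := by
    apply Finset.sum_subset (Finset.range_subset_range.2 (by omega))
    intro x _ hx
    simp only [mem_range, not_lt] at hx
    rw [Nat.choose_eq_zero_of_lt (by omega)]
    ring
  rw [← h2, h1]
  apply Finset.sum_congr rfl
  intro l hl
  simp only [mem_range] at hl
  rw [Nat.choose_symm (by omega), sq]

lemma sum_choose_cross_aux (n k : ℕ) :
    ∑ l ∈ range (n + k + 1), n.choose l * (if k ≤ l then n.choose (l - k) else 0) =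
      (2 * n).choose (n + k) := by
  have h1 : (2 * n).choose (n + k) =
      ∑ l ∈ range (n + k + 1), n.choose l * n.choose (n + k - l) := by
    rw [two_mul, Nat.add_choose_eq, Finset.Nat.sum_antidiagonal_eq_sum_range_succ_mk]
  rw [h1]
  apply Finset.sum_congr rfl
  intro l hl
  simp only [mem_range] at hl
  by_cases hkl : k ≤ l
  · rw [if_pos hkl]
    congr 1
    have : n + k - l = n - (l - k) := by omega
    rw [this, Nat.choose_symm (by omega)]
  · rw [if_neg hkl, Nat.choose_eq_zero_of_lt (show n < n + k - l by omega)]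

lemma sum_choose_sq_shift_aux (n k : ℕ) :
    ∑ l ∈ range (n + k + 1), (if k ≤ l then n.choose (l - k) else 0) ^ 2 =
      (2 * n).choose n := by
  have h2 : ∑ l ∈ Finset.Ico k (n + k + 1), (if k ≤ l then n.choose (l - k) else 0) ^ 2 =
      ∑ l ∈ range (n + k + 1), (if k ≤ l then n.choose (l - k) else 0) ^ 2 := by
    apply Finset.sum_subset
    · intro x hx
      simp only [Finset.mem_Ico, mem_range] at *
      omega
    · intro x hx1 hx2
      simp only [mem_range] at hx1
      simp only [Finset.mem_Ico, not_and, not_lt] at hx2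
      by_cases hkx : k ≤ x
      · exact absurd (hx2 hkx) (by omega)
      · rw [if_neg hkx]; ring
  rw [← h2, Finset.sum_Ico_eq_sum_range]
  have h3 : n + k + 1 - k = n + 1 := by omega
  rw [h3]
  have h4 : ∀ i ∈ range (n + 1),
      (if k ≤ k + i then n.choose (k + i - k) else 0) ^ 2 = (n.choose i) ^ 2 := by
    intro i _
    rw [if_pos (by omega)]
    congr 2
    omega
  rw [Finset.sum_congr rfl h4]
  exact sum_choose_sq_aux n n le_rfl

/-- The squared Euclidean norm of `h(overline{2^{[k]}};m)` equals
`2 (C(2(m-k), m-k) - (-1)^k C(2(m-k), m))`. -/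
theorem norm_sq_boundary_h_vector (m k : ℕ) (hk1 : 1 ≤ k) (hkm : k ≤ m) :
    ∑ l ∈ Finset.range (m + 1),
      ((-1 : ℤ) ^ l * (((m - k).choose l : ℤ) -
        (-1 : ℤ) ^ k * (if k ≤ l then ((m - k).choose (l - k) : ℤ) else 0))) ^ 2 =
    2 * (((2 * (m - k)).choose (m - k) : ℤ) -
      (-1 : ℤ) ^ k * ((2 * (m - k)).choose m : ℤ)) := by
  set n := m - k with hn
  have hm : m = n + k := by omega
  set A : ℕ → ℤ := fun l => (n.choose l : ℤ) with hA
  set B : ℕ → ℤ := fun l => (if k ≤ l then (n.choose (l - k) : ℤ) else 0) with hB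
  have expand : ∀ l, ((-1 : ℤ) ^ l * (A l - (-1 : ℤ) ^ k * B l)) ^ 2 =
      (A l) ^ 2 + (B l) ^ 2 - 2 * (-1 : ℤ) ^ k * (A l * B l) := by
    intro l
    have h1 : ((-1 : ℤ) ^ l) ^ 2 = 1 := by
      rw [← pow_mul, mul_comm, pow_mul]; norm_num
    have h2 : ((-1 : ℤ) ^ k) ^ 2 = 1 := by
      rw [← pow_mul, mul_comm, pow_mul]; norm_num
    rw [mul_pow, h1, one_mul, sub_sq, mul_pow, h2]
    ring
  have hsplit : ∑ l ∈ Finset.range (m + 1),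
      ((-1 : ℤ) ^ l * (A l - (-1 : ℤ) ^ k * B l)) ^ 2 =
      (∑ l ∈ Finset.range (m + 1), (A l) ^ 2) +
      (∑ l ∈ Finset.range (m + 1), (B l) ^ 2) -
      2 * (-1 : ℤ) ^ k * ∑ l ∈ Finset.range (m + 1), A l * B l := by
    rw [Finset.mul_sum, ← Finset.sum_add_distrib, ← Finset.sum_sub_distrib]
    exact Finset.sum_congr rfl fun l _ => expand l
  have e1 : ∑ l ∈ Finset.range (m + 1), (A l) ^ 2 = ((2 * n).choose n : ℤ) := by
    have := sum_choose_sq_aux n m (by omega)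
    have := congrArg (Nat.cast : ℕ → ℤ) this
    push_cast at this
    simpa [hA] using this
  have e2 : ∑ l ∈ Finset.range (m + 1), (B l) ^ 2 = ((2 * n).choose n : ℤ) := by
    have := sum_choose_sq_shift_aux n k
    have := congrArg (Nat.cast : ℕ → ℤ) this
    push_cast at this
    rw [hm]
    simpa [hB] using this
  have e3 : ∑ l ∈ Finset.range (m + 1), A l * B l = ((2 * n).choose m : ℤ) := by
    have := sum_choose_cross_aux n k
    have := congrArg (Nat.cast : ℕ → ℤ) this
    push_cast at this
    rw [hm]
    simpa [hA, hB] using this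
  rw [hsplit, e1, e2, e3]
  ring
end

section
/- Let m be even, 0 ≤ i ≤ m/2 and 0 ≤ j ≤ m. The row vector w with l-th component C(i,l-i) satisfies: the j-th component of w·S(m) equals (-1)^{j-i}·C(m-2i, j-i), where S(m) is the matrix with (a,b)-entry (-1)^{b-a}·C(m-a,b-a). Equivalently, ∑_{l} C(i,l-i)·(-1)^{j-l}·C(m-l,j-l) = (-1)^{j-i}·C(m-2i,j-i). -/
open Finset

lemma aux_alt (i : ℕ) : ∀ n k : ℕ, i ≤ n →
    ∑ t ∈ Finset.range (k + 1),
      (-1 : ℤ) ^ t * (i.choose t : ℤ) * (((n - t).choose (k - t) : ℕ) : ℤ)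
      = ((n - i).choose k : ℤ) := by
  induction i with
  | zero =>
    intro n k _
    rw [Finset.sum_eq_single 0]
    · simp
    · intro t _ ht
      obtain ⟨s, rfl⟩ := Nat.exists_eq_succ_of_ne_zero ht
      simp [Nat.choose_zero_succ]
    · simp
  | succ i ih =>
    intro n k hn
    match k with
    | 0 => simp
    | k' + 1 =>
      have hn' : i ≤ n - 1 := by omega
      have ih1 := ih (n - 1) k' hn'
      have ih2 := ih n (k' + 1) (by omega)
      rw [Finset.sum_range_succ'] at ih2 ⊢
      have e1 : ∀ t, n - (t + 1) = n - 1 - t := by omega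
      have e2 : ∀ t, k' + 1 - (t + 1) = k' - t := by omega
      have expand : ∀ t ∈ Finset.range (k' + 1),
          (-1 : ℤ) ^ (t + 1) * ((i + 1).choose (t + 1) : ℤ)
            * (((n - (t + 1)).choose (k' + 1 - (t + 1)) : ℕ) : ℤ)
          = -((-1 : ℤ) ^ t * (i.choose t : ℤ) * (((n - 1 - t).choose (k' - t) : ℕ) : ℤ))
            + (-1 : ℤ) ^ (t + 1) * (i.choose (t + 1) : ℤ)
              * (((n - (t + 1)).choose (k' + 1 - (t + 1)) : ℕ) : ℤ) := by
        intro t _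
        rw [Nat.choose_succ_succ, e1 t, e2 t]
        push_cast
        ring
      rw [Finset.sum_congr rfl expand, Finset.sum_add_distrib]
      have ih1' : ∑ t ∈ Finset.range (k' + 1),
          -((-1 : ℤ) ^ t * (i.choose t : ℤ) * (((n - 1 - t).choose (k' - t) : ℕ) : ℤ))
          = -(((n - 1 - i).choose k' : ℕ) : ℤ) := by
        rw [Finset.sum_neg_distrib, ih1]
      rw [ih1']
      -- remaining: -C(n-1-i,k') + (S2) + C(n,k'+1)·1·1 where from ih2:
      -- S2 + C(n, k'+1) = C(n-i, k'+1)
      have pascal : ((n - i).choose (k' + 1) : ℤ)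
          = ((n - (i + 1)).choose (k' + 1) : ℤ) + ((n - (i + 1)).choose k' : ℤ) := by
        have h1 : n - i = (n - (i + 1)) + 1 := by omega
        rw [h1, Nat.choose_succ_succ]
        push_cast
        ring
      have hni : n - 1 - i = n - (i + 1) := by omega
      rw [hni]
      have key : ∑ t ∈ Finset.range (k' + 1),
          (-1 : ℤ) ^ (t + 1) * (i.choose (t + 1) : ℤ)
            * (((n - (t + 1)).choose (k' + 1 - (t + 1)) : ℕ) : ℤ)
          = ((n - i).choose (k' + 1) : ℤ)
            - (-1 : ℤ) ^ 0 * (i.choose 0 : ℤ) * (((n - 0).choose (k' + 1 - 0) : ℕ) : ℤ) := by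
        linarith [ih2]
      rw [key]
      simp only [pow_zero, Nat.choose_zero_right, Nat.cast_one, one_mul, Nat.sub_zero,
        Nat.choose_zero_right]
      rw [pascal]
      push_cast
      ring

/-- For `m` even, `i ≤ m/2`, `j ≤ m`: the `j`-th component of
`(φ^▲(i;m)·T(m)^i)·S(m)` equals `(-1)^{j-i} C(m-2i, j-i)`. -/
theorem shifted_vector_times_S (m i j : ℕ) (hm : Even m) (hi : i ≤ m / 2) (hj : j ≤ m) :
    ∑ l ∈ Finset.range (m + 1),
      (if i ≤ l then ((i.choose (l - i) : ℤ)) else 0) *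
      (if l ≤ j then (-1 : ℤ) ^ (j - l) * ((m - l).choose (j - l) : ℤ) else 0) =
    if i ≤ j then (-1 : ℤ) ^ (j - i) * ((m - 2 * i).choose (j - i) : ℤ) else 0 := by
  have h2i : 2 * i ≤ m := by
    obtain ⟨r, rfl⟩ := hm
    omega
  by_cases hij : i ≤ j
  · rw [if_pos hij]
    have hsub : Finset.Icc i j ⊆ Finset.range (m + 1) := by
      intro l hl
      simp only [Finset.mem_Icc] at hl
      simp only [Finset.mem_range]
      omega
    rw [← Finset.sum_subset hsub (by
      intro l _ hl
      simp only [Finset.mem_Icc, not_and_or, not_le] at hl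
      rcases hl with h | h
      · rw [if_neg (show ¬ i ≤ l by omega), zero_mul]
      · rw [if_neg (show ¬ l ≤ j by omega), mul_zero])]
    have step : ∀ l ∈ Finset.Icc i j,
        (if i ≤ l then ((i.choose (l - i) : ℤ)) else 0) *
        (if l ≤ j then (-1 : ℤ) ^ (j - l) * ((m - l).choose (j - l) : ℤ) else 0)
        = (i.choose (l - i) : ℤ) * ((-1 : ℤ) ^ (j - l) * ((m - l).choose (j - l) : ℤ)) := by
      intro l hl
      simp only [Finset.mem_Icc] at hl
      rw [if_pos hl.1, if_pos hl.2]
    rw [Finset.sum_congr rfl step, ← Finset.Ico_add_one_right_eq_Icc, Finset.sum_Ico_eq_sum_range]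
    have hrange : j + 1 - i = (j - i) + 1 := by omega
    rw [hrange]
    have term : ∀ t ∈ Finset.range ((j - i) + 1),
        (i.choose (i + t - i) : ℤ) * ((-1 : ℤ) ^ (j - (i + t)) * ((m - (i + t)).choose (j - (i + t)) : ℤ))
        = (-1 : ℤ) ^ (j - i) * ((-1 : ℤ) ^ t * (i.choose t : ℤ) * ((((m - i) - t).choose ((j - i) - t) : ℕ) : ℤ)) := by
      intro t ht
      simp only [Finset.mem_range] at ht
      have h1 : i + t - i = t := by omega
      have h2 : j - (i + t) = (j - i) - t := by omega
      have h3 : m - (i + t) = (m - i) - t := by omega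
      rw [h1, h2, h3]
      have h4 : (-1 : ℤ) ^ (j - i) = (-1 : ℤ) ^ t * (-1 : ℤ) ^ ((j - i) - t) := by
        rw [← pow_add]
        congr 1
        omega
      rw [h4]
      ring_nf
      rw [pow_mul, ← pow_mul, mul_comm t 2, pow_mul, neg_one_sq, one_pow, mul_one]
    rw [Finset.sum_congr rfl term, ← Finset.mul_sum,
      aux_alt i (m - i) (j - i) (by omega)]
    have : m - i - i = m - 2 * i := by omega
    rw [this]
  · rw [if_neg hij]
    apply Finset.sum_eq_zero
    intro l _
    by_cases h1 : i ≤ l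
    · rw [if_neg (show ¬ l ≤ j by omega), mul_zero]
    · rw [if_neg h1, zero_mul]
end

section
/- Let m be odd, 0 ≤ i ≤ (m-1)/2 and 0 ≤ j ≤ m. Then ∑_{l=0}^{m} ( C(i+1, l-i) + C(i, l-i-1) )·(-1)^{j-l}·C(m-l, j-l) = (-1)^{j-i}·( C(m-2i-1, j-i) - C(m-2i-1, j-i-1) ). -/
open Finset

lemma aux_sum : ∀ (a n s : ℕ), a ≤ n →
    ∑ t ∈ Finset.range (s + 1),
      (-1 : ℤ) ^ t * (a.choose t : ℤ) * ((n - t).choose (s - t) : ℤ)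
      = ((n - a).choose s : ℤ) := by
  intro a
  induction a with
  | zero =>
    intro n s _
    rw [Finset.sum_eq_single 0]
    · simp
    · rintro (_ | t) ht hne
      · simp at hne
      · simp
    · simp
  | succ a ih =>
    intro n s h
    have h' : a ≤ n - 1 := by omega
    rcases s with _ | s
    · simp
    rw [Finset.sum_range_succ']
    have e1 : ∀ t ∈ Finset.range (s + 1),
        (-1 : ℤ) ^ (t+1) * ((a+1).choose (t+1) : ℤ) * ((n - (t+1)).choose (s + 1 - (t+1)) : ℤ)
        = -((-1 : ℤ) ^ t * (a.choose t : ℤ) * (((n-1) - t).choose (s - t) : ℤ))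
          + (-1 : ℤ) ^ (t+1) * (a.choose (t+1) : ℤ) * ((n - (t+1)).choose (s + 1 - (t+1)) : ℤ) := by
      intro t ht
      rw [Nat.choose_succ_succ, show n - (t+1) = (n-1) - t from by omega,
          show s + 1 - (t+1) = s - t from by omega]
      push_cast
      ring
    rw [Finset.sum_congr rfl e1, Finset.sum_add_distrib]
    have hsum1 := ih (n-1) s h'
    rw [show n - 1 - a = n - (a+1) from by omega] at hsum1
    have hsum2 := ih n (s+1) (by omega)
    rw [Finset.sum_range_succ'] at hsum2
    have hp : ((n-a).choose (s+1) : ℤ) = ((n-(a+1)).choose (s+1) : ℤ) + ((n-(a+1)).choose s : ℤ) := by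
      rw [show n - a = (n - (a+1)) + 1 from by omega, Nat.choose_succ_succ]
      push_cast; ring
    simp only [Finset.sum_neg_distrib]
    rw [hsum1]
    simp only [pow_zero, Nat.choose_zero_right, Nat.cast_one, one_mul, Nat.sub_zero] at hsum2 ⊢
    linarith

lemma neg_one_pow_sub_s19 {s t : ℕ} (h : t ≤ s) : (-1 : ℤ) ^ (s - t) = (-1) ^ s * (-1) ^ t := by
  rw [← pow_add, show s + t = (s - t) + 2 * t from by omega, pow_add, pow_mul]
  norm_num

/-- For `m` odd, `i ≤ (m-1)/2`, `j ≤ m`: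
`∑_l (C(i+1, l-i) + C(i, l-i-1)) (-1)^{j-l} C(m-l, j-l)
  = (-1)^{j-i} (C(m-2i-1, j-i) - C(m-2i-1, j-i-1))`. -/
theorem shifted_vector_sum_times_S (m i j : ℕ) (hm : Odd m)
    (hi : i ≤ (m - 1) / 2) (hj : j ≤ m) :
    ∑ l ∈ Finset.range (m + 1),
      ((if i ≤ l then (((i + 1).choose (l - i) : ℤ)) else 0) +
        (if i + 1 ≤ l then ((i.choose (l - i - 1) : ℤ)) else 0)) *
      (if l ≤ j then (-1 : ℤ) ^ (j - l) * ((m - l).choose (j - l) : ℤ) else 0) =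
    if i ≤ j then
      (-1 : ℤ) ^ (j - i) * (((m - 2 * i - 1).choose (j - i) : ℤ) -
        (if i + 1 ≤ j then ((m - 2 * i - 1).choose (j - i - 1) : ℤ) else 0))
    else 0 := by
  obtain ⟨k, hk⟩ := hm
  have hm2 : 2 * i + 1 ≤ m := by omega
  by_cases hij : i ≤ j
  · rw [if_pos hij]
    set s := j - i with hs
    -- split the sum into two sums
    rw [show (∑ l ∈ Finset.range (m + 1),
      ((if i ≤ l then (((i + 1).choose (l - i) : ℤ)) else 0) +
        (if i + 1 ≤ l then ((i.choose (l - i - 1) : ℤ)) else 0)) *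
      (if l ≤ j then (-1 : ℤ) ^ (j - l) * ((m - l).choose (j - l) : ℤ) else 0))
      = (∑ l ∈ Finset.range (m + 1),
          (if i ≤ l then (((i + 1).choose (l - i) : ℤ)) else 0) *
          (if l ≤ j then (-1 : ℤ) ^ (j - l) * ((m - l).choose (j - l) : ℤ) else 0)) +
        (∑ l ∈ Finset.range (m + 1),
          (if i + 1 ≤ l then ((i.choose (l - i - 1) : ℤ)) else 0) *
          (if l ≤ j then (-1 : ℤ) ^ (j - l) * ((m - l).choose (j - l) : ℤ) else 0))
      from by rw [← Finset.sum_add_distrib]; exact Finset.sum_congr rfl fun l _ => by ring]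
    -- first sum
    have h1 : (∑ l ∈ Finset.range (m + 1),
          (if i ≤ l then (((i + 1).choose (l - i) : ℤ)) else 0) *
          (if l ≤ j then (-1 : ℤ) ^ (j - l) * ((m - l).choose (j - l) : ℤ) else 0))
        = (-1 : ℤ) ^ s * ((m - 2 * i - 1).choose s : ℤ) := by
      rw [← Finset.sum_subset (show Finset.Icc i j ⊆ Finset.range (m + 1) from by
            intro x hx; simp only [Finset.mem_Icc] at hx; simp only [Finset.mem_range]; omega)
          (by intro x hx hx2
              simp only [Finset.mem_Icc, not_and_or, not_le] at hx2
              rcases hx2 with h | h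
              · rw [if_neg (show ¬ i ≤ x from by omega)]; ring
              · rw [if_neg (show ¬ x ≤ j from by omega)]; ring)]
      rw [← Finset.Ico_add_one_right_eq_Icc, Finset.sum_Ico_eq_sum_range,
        show j + 1 - i = s + 1 from by omega]
      have haux := aux_sum (i+1) (m-i) s (by omega)
      rw [show m - i - (i+1) = m - 2*i - 1 from by omega] at haux
      rw [← haux, Finset.mul_sum]
      refine Finset.sum_congr rfl fun t ht => ?_
      simp only [Finset.mem_range] at ht
      rw [if_pos (by omega), if_pos (by omega),
          show i + t - i = t from by omega, show j - (i + t) = s - t from by omega,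
          show m - (i + t) = m - i - t from by omega, neg_one_pow_sub_s19 (by omega)]
      ring
    -- second sum
    have h2 : (∑ l ∈ Finset.range (m + 1),
          (if i + 1 ≤ l then ((i.choose (l - i - 1) : ℤ)) else 0) *
          (if l ≤ j then (-1 : ℤ) ^ (j - l) * ((m - l).choose (j - l) : ℤ) else 0))
        = -((-1 : ℤ) ^ s *
            (if i + 1 ≤ j then ((m - 2 * i - 1).choose (j - i - 1) : ℤ) else 0)) := by
      by_cases hij2 : i + 1 ≤ j
      · rw [if_pos hij2]
        rw [← Finset.sum_subset (show Finset.Icc (i+1) j ⊆ Finset.range (m + 1) from by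
              intro x hx; simp only [Finset.mem_Icc] at hx; simp only [Finset.mem_range]; omega)
            (by intro x hx hx2
                simp only [Finset.mem_Icc, not_and_or, not_le] at hx2
                rcases hx2 with h | h
                · rw [if_neg (show ¬ i + 1 ≤ x from by omega)]; ring
                · rw [if_neg (show ¬ x ≤ j from by omega)]; ring)]
        rw [← Finset.Ico_add_one_right_eq_Icc, Finset.sum_Ico_eq_sum_range,
          show j + 1 - (i + 1) = (s - 1) + 1 from by omega]
        have := aux_sum i (m-i-1) (s-1) (by omega)
        rw [show m - i - 1 - i = m - 2*i - 1 from by omega,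
            show s - 1 = j - i - 1 from by omega] at this
        rw [← this, Finset.mul_sum, ← Finset.sum_neg_distrib]
        refine Finset.sum_congr rfl fun t ht => ?_
        simp only [Finset.mem_range] at ht
        rw [if_pos (by omega), if_pos (by omega),
            show i + 1 + t - i - 1 = t from by omega,
            show j - (i + 1 + t) = (s - 1) - t from by omega,
            show m - (i + 1 + t) = m - i - 1 - t from by omega,
            show j - i - 1 - t = (s - 1) - t from by omega,
            neg_one_pow_sub_s19 (show t ≤ s - 1 from by omega),
            show (-1 : ℤ) ^ (s - 1) = -(-1) ^ s from by
              have hp : (-1 : ℤ) ^ s = (-1) ^ (s - 1) * (-1) := by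
                rw [← pow_succ, show s - 1 + 1 = s from by omega]
              rw [hp]; ring]
        ring
      · rw [if_neg hij2]
        rw [Finset.sum_eq_zero, mul_zero, neg_zero]
        intro l hl
        by_cases h3 : i + 1 ≤ l
        · rw [if_neg (show ¬ l ≤ j from by omega)]; ring
        · rw [if_neg h3]; ring
    rw [h1, h2]
    ring
  · rw [if_neg hij]
    apply Finset.sum_eq_zero
    intro l hl
    by_cases h3 : i ≤ l
    · rw [if_neg (show ¬ l ≤ j from by omega)]; ring
    · rw [if_neg h3, if_neg (by omega)]; ring
end
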